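/- arXiv:2504.21182 — 2 statements merged into one kernel-verified Lean document; each statement's English description precedes it below -/
import Mathlib

section
/- Let q be a prime power and α a generator of F_q^×. For ρ ≤ q-1 and an integer e with ρ-2 < e ≤ q-2, the (ρ) × (ρ) matrix whose first ρ-1 rows are (α^{i·r})_{i=1..ρ} for r = 0,...,ρ-2 and whose last row is (α^{i·e})_{i=1..ρ} is invertible over F_q. -/
open Finset

/-- For a finite field `F` with generator `α` of `Fˣ`, `ρ ≤ q-1`,
and an integer `e` with `ρ - 2 < e ≤ q - 2`, the `ρ × ρ` matrix whose rows
`r = 0,…,ρ-2` are `(α^{i·r})_{i=1..ρ}` and whose last row is `(α^{i·e})_{i=1..ρ}`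
is invertible. -/
theorem stmt2 {F : Type*} [Field F] [Fintype F]
    (α : Fˣ) (hα : ∀ x : Fˣ, x ∈ Subgroup.zpowers α)
    (ρ : ℕ) (hρ1 : 1 ≤ ρ) (hρ : ρ ≤ Fintype.card F - 1)
    (e : ℕ) (he1 : ρ - 2 < e) (he2 : e ≤ Fintype.card F - 2) :
    IsUnit (Matrix.det (Matrix.of fun r i : Fin ρ =>
      if (r : ℕ) < ρ - 1 then (α : F) ^ (((i : ℕ) + 1) * (r : ℕ))
      else (α : F) ^ (((i : ℕ) + 1) * e))) := by
  classical
  set q := Fintype.card F with hq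
  have hord : orderOf (α : F) = q - 1 := by
    rw [orderOf_units, orderOf_eq_card_of_forall_mem_zpowers hα, ← Fintype.card_units, Nat.card_eq_fintype_card]
  have hαne : (α : F) ≠ 0 := Units.ne_zero α
  set ex : Fin ρ → ℕ := fun r => if (r : ℕ) < ρ - 1 then (r : ℕ) else e with hex
  set y : Fin ρ → F := fun r => (α : F) ^ ex r with hy
  have hexlt : ∀ r : Fin ρ, ex r < q - 1 := by
    intro r
    have hr := r.isLt
    simp only [hex]
    split <;> omega
  have hyinj : Function.Injective y := by
    intro r s h
    have hinj := pow_injOn_Iio_orderOf (x := (α : F))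
    have : ex r = ex s := by
      apply hinj <;> simp [Set.mem_Iio, hord, hexlt]
      exact h
    have hr := r.isLt; have hs := s.isLt
    apply Fin.ext
    simp only [hex] at this
    split at this <;> split at this <;> omega
  have hM : (Matrix.of fun r i : Fin ρ =>
      if (r : ℕ) < ρ - 1 then (α : F) ^ (((i : ℕ) + 1) * (r : ℕ))
      else (α : F) ^ (((i : ℕ) + 1) * e)) = Matrix.diagonal y * Matrix.vandermonde y := by
    ext r i
    rw [Matrix.diagonal_mul]
    simp only [Matrix.of_apply, Matrix.vandermonde_apply, hy, hex]
    rw [← pow_succ', ← pow_mul]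
    split <;> ring_nf
  rw [hM, Matrix.det_mul, Matrix.det_diagonal]
  apply IsUnit.mul
  · rw [isUnit_iff_ne_zero]
    exact Finset.prod_ne_zero_iff.mpr fun r _ => pow_ne_zero _ hαne
  · rw [isUnit_iff_ne_zero, Matrix.det_vandermonde_ne_zero_iff]
    exact hyinj
end

section
/- Let F(x) = ∑_{u=1}^{k-z} x^{u-1} M_u + ∑_{τ=1}^{z} x^{k-z+τ-1} R_τ over F_q, where M_1,...,M_{k-z} are messages and R_1,...,R_z are independent uniform elements of F_q independent of the messages. Let α_1,...,α_n be distinct nonzero elements of F_q. Then for any T ⊆ [n] with |T| ≤ z, the shares (F(α_i))_{i∈T} are jointly independent of (M_1,...,M_{k-z}). -/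
open MeasureTheory ProbabilityTheory Finset

/-!
Write the shares as `f(M) + W r`, where `r` is the mask vector and `W i τ = α_i ^ (k - z + τ)`.
After dividing row `i` by `α_i ^ (k - z) ≠ 0`, Lagrange interpolation through the at most `z`
distinct nodes `α_i` shows that `W` is surjective, so `W r` is uniform on `F^T` (fibres of a
surjective additive map all have the same size). A uniform pad that is independent of `M` hides
`f(M)`: `P(shares = b, M = m) = P(M = m) / |F|^|T|` for all `b` and `m`.
-/

theorem exists_sum_pow_mul_eq_of_injOn {F ι : Type*} [Field F] [DecidableEq ι]
    {s : Finset ι} {v : ι → F} (hv : Set.InjOn v s) {z : ℕ} (hs : #s ≤ z) (y : ι → F) :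
    ∃ r : Fin z → F, ∀ i ∈ s, ∑ τ : Fin z, v i ^ (τ : ℕ) * r τ = y i := by
  rcases s.eq_empty_or_nonempty with rfl | hne
  · exact ⟨0, by simp⟩
  set P := Lagrange.interpolate s v y
  have hP : P.natDegree < z := by
    by_cases hP0 : P = 0
    · rw [hP0, Polynomial.natDegree_zero]
      exact hne.card_pos.trans_le hs
    rw [Polynomial.natDegree_lt_iff_degree_lt hP0]
    exact (Lagrange.degree_interpolate_lt y hv).trans_le (by exact_mod_cast hs)
  refine ⟨fun τ => P.coeff τ, fun i hi => ?_⟩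
  rw [← Lagrange.eval_interpolate_at_node y hv hi, Polynomial.eval_eq_sum_range' hP,
    ← Fin.sum_univ_eq_sum_range]
  simp only [mul_comm]

theorem surjective_mulVec_pow_add {F ι : Type*} [Field F] [Fintype ι] {v : ι → F}
    (hv : Function.Injective v) (hv0 : ∀ i, v i ≠ 0) {z : ℕ} (hcard : Fintype.card ι ≤ z)
    (m : ℕ) : Function.Surjective (Matrix.of fun i (τ : Fin z) => v i ^ (m + τ)).mulVec := by
  classical
  intro y
  obtain ⟨r, hr⟩ := exists_sum_pow_mul_eq_of_injOn hv.injOn (s := univ) hcard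
    fun i => y i / v i ^ m
  refine ⟨r, funext fun i => ?_⟩
  simp only [Matrix.mulVec, dotProduct, Matrix.of_apply, pow_add, mul_assoc, ← mul_sum,
    hr i (mem_univ i)]
  field_simp [hv0 i]

theorem measure_preimage_singleton_pi_of_iIndepFun {Ω ι F : Type*} [MeasurableSpace Ω]
    {μ : Measure Ω} [Fintype ι] [DecidableEq ι] [Fintype F] [MeasurableSpace F]
    [MeasurableSingletonClass F] {R : ι → Ω → F} (hR : iIndepFun R μ)
    (hunif : ∀ i v, μ (R i ⁻¹' {v}) = (Fintype.card F : ENNReal)⁻¹) (r : ι → F) :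
    μ ((fun ω i => R i ω) ⁻¹' {r}) = (Fintype.card (ι → F) : ENNReal)⁻¹ := by
  have hpre : (fun ω i => R i ω) ⁻¹' {r} = ⋂ i, R i ⁻¹' {r i} := by
    ext ω
    simp [funext_iff]
  rw [hpre, hR.meas_iInter fun i => ⟨{r i}, measurableSet_singleton _, rfl⟩]
  simp [hunif, ENNReal.inv_pow]

theorem AddMonoidHom.card_fiber_mul_card_of_surjective {G H : Type*} [AddGroup G] [Fintype G]
    [AddGroup H] [Fintype H] [DecidableEq H] (A : G →+ H) (hA : Function.Surjective A)
    (h : H) :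
    #{g | A g = h} * Fintype.card H = Fintype.card G := by
  have hfib : ∀ h', #{g | A g = h'} = #{g | A g = h} := fun h' =>
    AddMonoidHom.card_fiber_eq_of_mem_range A (hA h') (hA h)
  rw [← card_univ (α := G), card_eq_sum_card_fiberwise (s := univ) (t := univ) (f := A)
    fun _ _ => mem_univ _, sum_congr rfl fun h' _ => hfib h', sum_const, card_univ, smul_eq_mul,
    mul_comm]

theorem measure_preimage_singleton_comp_of_surjective {Ω G H : Type*} [MeasurableSpace Ω]
    {μ : Measure Ω} [AddGroup G] [Fintype G] [MeasurableSpace G] [MeasurableSingletonClass G]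
    [AddGroup H] [Fintype H] (A : G →+ H) (hA : Function.Surjective A) {U : Ω → G}
    (hU : Measurable U) (hunif : ∀ g, μ (U ⁻¹' {g}) = (Fintype.card G : ENNReal)⁻¹)
    (h : H) : μ ((fun ω => A (U ω)) ⁻¹' {h}) = (Fintype.card H : ENNReal)⁻¹ := by
  classical
  have hpre : (fun ω => A (U ω)) ⁻¹' {h} = U ⁻¹' ↑({g | A g = h} : Finset G) := by
    ext ω
    simp
  rw [hpre, ← sum_measure_preimage_singleton _ fun g _ => hU (measurableSet_singleton g)]
  simp only [hunif, sum_const, nsmul_eq_mul]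
  have hfiber : (#{g | A g = h} : ENNReal) ≠ 0 := by simpa using hA h
  rw [← A.card_fiber_mul_card_of_surjective hA h, Nat.cast_mul, ENNReal.mul_inv (by simp)
    (by simp), ← mul_assoc, ENNReal.mul_inv_cancel hfiber (by simp), one_mul]

theorem measure_eq_tsum_inter_preimage_singleton {Ω β : Type*} [MeasurableSpace Ω]
    {μ : Measure Ω} [MeasurableSpace β] [Countable β] [MeasurableSingletonClass β]
    {Y : Ω → β} (hY : Measurable Y) {S : Set Ω} (hS : MeasurableSet S) :
    μ S = ∑' y, μ (S ∩ Y ⁻¹' {y}) := by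
  rw [← measure_iUnion (fun y y' hyy' => ((pairwise_disjoint_fiber Y hyy').mono
      Set.inter_subset_right Set.inter_subset_right))
    fun y => hS.inter (hY (measurableSet_singleton y)), ← Set.inter_iUnion,
    ← Set.preimage_iUnion, Set.iUnion_of_singleton, Set.preimage_univ, Set.inter_univ]

theorem indepFun_of_measure_inter_preimage_singleton_eq_mul {Ω β γ : Type*} [MeasurableSpace Ω]
    {μ : Measure Ω} [IsFiniteMeasure μ] [MeasurableSpace β] [MeasurableSpace γ]
    [Countable β] [Countable γ] [MeasurableSingletonClass β] [MeasurableSingletonClass γ]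
    {f : Ω → β} {g : Ω → γ} (hf : Measurable f) (hg : Measurable g)
    (h : ∀ b c, μ (f ⁻¹' {b} ∩ g ⁻¹' {c}) = μ (f ⁻¹' {b}) * μ (g ⁻¹' {c})) :
    IndepFun f g μ := by
  rw [indepFun_iff_map_prod_eq_prod_map_map hf.aemeasurable hg.aemeasurable,
    Measure.ext_iff_singleton]
  rintro ⟨b, c⟩
  rw [← Set.singleton_prod_singleton, Measure.prod_prod,
    Measure.map_apply (hf.prodMk hg) ((measurableSet_singleton b).prod (measurableSet_singleton c)),
    Measure.map_apply hf (measurableSet_singleton b),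
    Measure.map_apply hg (measurableSet_singleton c), Set.mk_preimage_prod]
  exact h b c

theorem IndepFun.indepFun_add_uniform {Ω β G : Type*} [MeasurableSpace Ω] {μ : Measure Ω}
    [IsProbabilityMeasure μ] [MeasurableSpace β] [Countable β] [MeasurableSingletonClass β]
    [AddGroup G] [Fintype G] [MeasurableSpace G] [MeasurableSingletonClass G]
    {Y : Ω → β} {U : Ω → G} (hY : Measurable Y) (hU : Measurable U) (hYU : IndepFun Y U μ)
    (hunif : ∀ g, μ (U ⁻¹' {g}) = (Fintype.card G : ENNReal)⁻¹) (f : β → G) :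
    IndepFun (fun ω => f (Y ω) + U ω) Y μ := by
  set X := fun ω => f (Y ω) + U ω
  have hX : Measurable X :=
    (measurable_of_countable fun p : β × G => f p.1 + p.2).comp (hY.prodMk hU)
  have hjoint : ∀ b y,
      μ (X ⁻¹' {b} ∩ Y ⁻¹' {y}) = μ (Y ⁻¹' {y}) * (Fintype.card G : ENNReal)⁻¹ := by
    intro b y
    have hpre : X ⁻¹' {b} ∩ Y ⁻¹' {y} = Y ⁻¹' {y} ∩ U ⁻¹' {-f y + b} := by
      ext ω
      simp only [X, Set.mem_inter_iff, Set.mem_preimage, Set.mem_singleton_iff]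
      constructor
      · rintro ⟨hb, rfl⟩; exact ⟨rfl, by rw [← hb, neg_add_cancel_left]⟩
      · rintro ⟨rfl, hu⟩; exact ⟨by rw [hu, add_neg_cancel_left], rfl⟩
    rw [hpre, hYU.measure_inter_preimage_eq_mul _ _ (measurableSet_singleton _)
      (measurableSet_singleton _), hunif]
  have hmarginal : ∀ b, μ (X ⁻¹' {b}) = (Fintype.card G : ENNReal)⁻¹ := by
    intro b
    have htotal : ∑' y, μ (Y ⁻¹' {y}) = 1 := by
      simpa using (measure_eq_tsum_inter_preimage_singleton (μ := μ) hY MeasurableSet.univ).symm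
    rw [measure_eq_tsum_inter_preimage_singleton hY (hX (measurableSet_singleton b))]
    simp only [hjoint, ENNReal.tsum_mul_right, htotal, one_mul]
  refine indepFun_of_measure_inter_preimage_singleton_eq_mul hX hY fun b y => ?_
  rw [hjoint, hmarginal, mul_comm]

theorem stmt8_general {Ω : Type*} [MeasurableSpace Ω] (μ : Measure Ω) [IsProbabilityMeasure μ]
    {F : Type*} [Field F] [Fintype F] [MeasurableSpace F] [MeasurableSingletonClass F]
    (k z n : ℕ)
    (M : Fin (k - z) → Ω → F) (R : Fin z → Ω → F)
    (hMmeas : ∀ u, Measurable (M u)) (hRmeas : ∀ τ, Measurable (R τ))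
    (hRindep : iIndepFun R μ)
    (hMRindep : IndepFun (fun ω => fun u => M u ω) (fun ω => fun τ => R τ ω) μ)
    (hRunif : ∀ (τ : Fin z) (v : F), μ (R τ ⁻¹' {v}) = (Fintype.card F : ENNReal)⁻¹)
    (α : Fin n → F) (hα0 : ∀ i, α i ≠ 0) (hαinj : Function.Injective α)
    (T : Finset (Fin n)) (hT : T.card ≤ z) :
    IndepFun
      (fun ω => fun i : T =>
        (∑ u : Fin (k - z), α i.1 ^ (u : ℕ) * M u ω)
        + ∑ τ : Fin z, α i.1 ^ (k - z + (τ : ℕ)) * R τ ω)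
      (fun ω => fun u => M u ω) μ := by
  classical
  set W : Matrix T (Fin z) F := Matrix.of fun i τ => α i ^ (k - z + (τ : ℕ))
  have hW : Function.Surjective W.mulVec :=
    surjective_mulVec_pow_add (hαinj.comp Subtype.val_injective) (fun i => hα0 i.1)
      (by simpa using hT) (k - z)
  have hR : Measurable fun ω τ => R τ ω := measurable_pi_lambda _ hRmeas
  have hmask_unif : ∀ y : T → F,
      μ ((fun ω => W.mulVecLin fun τ => R τ ω) ⁻¹' {y}) =
        (Fintype.card (T → F) : ENNReal)⁻¹ :=
    measure_preimage_singleton_comp_of_surjective W.mulVecLin.toAddMonoidHom hW hR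
      (measure_preimage_singleton_pi_of_iIndepFun hRindep hRunif)
  exact IndepFun.indepFun_add_uniform (measurable_pi_lambda _ hMmeas)
    ((measurable_of_countable _).comp hR) (hMRindep.comp measurable_id (measurable_of_countable _))
    hmask_unif fun m i => ∑ u : Fin (k - z), α i.1 ^ (u : ℕ) * m u

/-- z-privacy of McEliece–Sarwate ramp sharing: with
`F(x) = ∑_{u=1}^{k-z} x^{u-1} M_u + ∑_{τ=1}^{z} x^{k-z+τ-1} R_τ`, messages
`M_u`, mutually independent uniform masks `R_τ` independent of the message
vector, and distinct nonzero evaluation points `α_1,…,α_n`, the shares of any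
set `T` with `|T| ≤ z` are jointly independent of `(M_1,…,M_{k-z})`. -/
theorem stmt8 {Ω : Type*} [MeasurableSpace Ω] (μ : Measure Ω) [IsProbabilityMeasure μ]
    {F : Type*} [Field F] [Fintype F] [MeasurableSpace F] [MeasurableSingletonClass F]
    (k z n : ℕ) (hzk : z ≤ k)
    (M : Fin (k - z) → Ω → F) (R : Fin z → Ω → F)
    (hMmeas : ∀ u, Measurable (M u)) (hRmeas : ∀ τ, Measurable (R τ))
    (hRindep : iIndepFun R μ)
    (hMRindep : IndepFun (fun ω => fun u => M u ω) (fun ω => fun τ => R τ ω) μ)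
    (hRunif : ∀ (τ : Fin z) (v : F), μ (R τ ⁻¹' {v}) = (Fintype.card F : ENNReal)⁻¹)
    (α : Fin n → F) (hα0 : ∀ i, α i ≠ 0) (hαinj : Function.Injective α)
    (T : Finset (Fin n)) (hT : T.card ≤ z) :
    IndepFun
      (fun ω => fun i : T =>
        (∑ u : Fin (k - z), α i.1 ^ (u : ℕ) * M u ω)
        + ∑ τ : Fin z, α i.1 ^ (k - z + (τ : ℕ)) * R τ ω)
      (fun ω => fun u => M u ω) μ :=
  stmt8_general μ k z n M R hMmeas hRmeas hRindep hMRindep hRunif α hα0 hαinj T hT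
end
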